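/- arXiv:1204.0997 — 2 statements merged into one kernel-verified Lean document; each statement's English description precedes it below -/
import Mathlib

section
/- Let M be a transition matrix on a finite nonempty type σ and let P and Q be two stationary distributions for M with the same support Φ = {i : P i > 0} = {i : Q i > 0}. If Φ is closed (M i j = 0 whenever j ∈ Φ and i ∉ Φ) and strongly connected (any two states of Φ are mutually reachable in the transition graph), then P = Q. -/
/-!
Let `c` be the least ratio `P i / Q i` over the support. Then `R = P - c • Q` is a nonnegative
stationary vector vanishing somewhere on the support. Stationarity at a zero `b` of `R` reads
`∑ j, M b j * R j = 0`, a sum of nonnegative terms, so `R` also vanishes at every `a` with an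
edge `a → b`. Strong connectivity spreads the zero over the whole support, so `P = c • Q`, and
comparing total masses gives `c = 1`.
-/

open Finset

namespace Matrix

variable {σ 𝕜 : Type*} [Fintype σ]

def TransitionEdge [Zero 𝕜] [LT 𝕜] (M : Matrix σ σ 𝕜) (a b : σ) : Prop := a ≠ b ∧ 0 < M b a

section OrderedSemiring

variable [Semiring 𝕜] [PartialOrder 𝕜] [IsOrderedRing 𝕜] [NoZeroDivisors 𝕜]
  {M : Matrix σ σ 𝕜} {R : σ → 𝕜}

theorem eq_zero_of_transitionEdge (hMoff : ∀ i j, i ≠ j → 0 ≤ M i j) (hR : 0 ≤ R)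
    (hRstat : M *ᵥ R = 0) {a b : σ} (hab : TransitionEdge M a b) (hb : R b = 0) :
    R a = 0 := by
  have hterms : ∀ j ∈ univ, 0 ≤ M b j * R j := by
    intro j _
    by_cases hj : b = j
    · simp [← hj, hb]
    · exact mul_nonneg (hMoff b j hj) (hR j)
  have hsum : ∑ j, M b j * R j = 0 := congrFun hRstat b
  have hMRa := (sum_eq_zero_iff_of_nonneg hterms).mp hsum a (mem_univ a)
  exact (mul_eq_zero.mp hMRa).resolve_left hab.2.ne'

theorem eq_zero_of_reflTransGen_transitionEdge (hMoff : ∀ i j, i ≠ j → 0 ≤ M i j)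
    (hR : 0 ≤ R) (hRstat : M *ᵥ R = 0) {a b : σ}
    (hab : Relation.ReflTransGen (TransitionEdge M) a b) (hb : R b = 0) : R a = 0 := by
  induction hab using Relation.ReflTransGen.head_induction_on with
  | refl => exact hb
  | head hac _ hc => exact eq_zero_of_transitionEdge hMoff hR hRstat hac hc

end OrderedSemiring

variable [Field 𝕜] [LinearOrder 𝕜] [IsStrictOrderedRing 𝕜] {M : Matrix σ σ 𝕜}

theorem exists_eq_smul_of_mulVec_eq_zero (hMoff : ∀ i j, i ≠ j → 0 ≤ M i j)
    {P Q : σ → 𝕜} (hP : 0 ≤ P) (hQ : 0 ≤ Q) (hPstat : M *ᵥ P = 0) (hQstat : M *ᵥ Q = 0)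
    (hsupp : ∀ i, 0 < P i ↔ 0 < Q i)
    (hconn : ∀ i, 0 < Q i → ∀ j, 0 < Q j → Relation.ReflTransGen (TransitionEdge M) i j) :
    ∃ c : 𝕜, P = c • Q := by
  have hoff : ∀ i, ¬ 0 < Q i → P i = 0 ∧ Q i = 0 := fun i hi =>
    ⟨le_antisymm (not_lt.mp (mt (hsupp i).mp hi)) (hP i), le_antisymm (not_lt.mp hi) (hQ i)⟩
  rcases (univ.filter fun i => 0 < Q i).eq_empty_or_nonempty with hempty | hne
  · refine ⟨0, funext fun i => ?_⟩
    have hi : ¬ 0 < Q i := filter_eq_empty_iff.mp hempty (mem_univ i)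
    simp [(hoff i hi).1]
  obtain ⟨i₀, hi₀, hmin⟩ := exists_min_image _ (fun i => P i / Q i) hne
  have hQi₀ : 0 < Q i₀ := (mem_filter.mp hi₀).2
  set c := P i₀ / Q i₀
  have hR : 0 ≤ P - c • Q := by
    intro i
    by_cases hi : 0 < Q i
    · have := (le_div_iff₀ hi).mp (hmin i (mem_filter.mpr ⟨mem_univ i, hi⟩))
      simpa using this
    · simp [(hoff i hi).1, (hoff i hi).2]
  have hRstat : M *ᵥ (P - c • Q) = 0 := by
    rw [mulVec_sub, mulVec_smul, hPstat, hQstat, smul_zero, sub_zero]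
  have hRi₀ : (P - c • Q) i₀ = 0 := by
    simp [c, div_mul_cancel₀ _ hQi₀.ne']
  refine ⟨c, funext fun i => ?_⟩
  by_cases hi : 0 < Q i
  · exact sub_eq_zero.mp
      (eq_zero_of_reflTransGen_transitionEdge hMoff hR hRstat (hconn i hi i₀ hQi₀) hRi₀)
  · simp [(hoff i hi).1, (hoff i hi).2]

end Matrix

theorem stationary_unique_on_closed_scc_general
    {σ : Type*} [Fintype σ]
    (M : Matrix σ σ ℝ)
    (hMoff : ∀ i j : σ, i ≠ j → 0 ≤ M i j)
    (P Q : σ → ℝ)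
    (hPnonneg : ∀ i, 0 ≤ P i) (hPsum : ∑ i, P i = 1) (hPstat : M.mulVec P = 0)
    (hQnonneg : ∀ i, 0 ≤ Q i) (hQsum : ∑ i, Q i = 1) (hQstat : M.mulVec Q = 0)
    (Φ : Set σ)
    (hPsupp : {i : σ | 0 < P i} = Φ)
    (hQsupp : {i : σ | 0 < Q i} = Φ)
    (hΦscc : ∀ i ∈ Φ, ∀ j ∈ Φ,
      Relation.ReflTransGen (fun a b : σ => a ≠ b ∧ 0 < M b a) i j) :
    P = Q := by
  obtain ⟨c, hPc⟩ := Matrix.exists_eq_smul_of_mulVec_eq_zero hMoff hPnonneg hQnonneg hPstat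
    hQstat (fun i => Set.ext_iff.mp (hPsupp.trans hQsupp.symm) i)
    (fun i hi j hj => hΦscc i (hQsupp.subset hi) j (hQsupp.subset hj))
  have hc : c = 1 := by
    simpa [hPc, ← mul_sum, hQsum] using hPsum
  rw [hPc, hc, one_smul]

/-- Two stationary distributions for the same transition matrix `M` with the
same support `Φ`, where `Φ` is closed and strongly connected in the transition graph,
are identical. -/
theorem stationary_unique_on_closed_scc
    {σ : Type*} [Fintype σ] [Nonempty σ] [DecidableEq σ]
    (M : Matrix σ σ ℝ)
    (hMoff : ∀ i j : σ, i ≠ j → 0 ≤ M i j)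
    (hMcol : ∀ j : σ, ∑ i, M i j = 0)
    (P Q : σ → ℝ)
    (hPnonneg : ∀ i, 0 ≤ P i) (hPsum : ∑ i, P i = 1) (hPstat : M.mulVec P = 0)
    (hQnonneg : ∀ i, 0 ≤ Q i) (hQsum : ∑ i, Q i = 1) (hQstat : M.mulVec Q = 0)
    (Φ : Set σ)
    (hPsupp : {i : σ | 0 < P i} = Φ)
    (hQsupp : {i : σ | 0 < Q i} = Φ)
    (hΦclosed : ∀ i j : σ, j ∈ Φ → i ∉ Φ → M i j = 0)
    (hΦscc : ∀ i ∈ Φ, ∀ j ∈ Φ,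
      Relation.ReflTransGen (fun a b : σ => a ≠ b ∧ 0 < M b a) i j) :
    P = Q :=
  stationary_unique_on_closed_scc_general M hMoff P Q hPnonneg hPsum hPstat hQnonneg hQsum hQstat Φ
    hPsupp hQsupp hΦscc
end

section
/- Let M be an irreducible transition matrix on a finite nonempty type σ. Then there exists a stationary distribution P* with strictly positive entries such that for every probability vector P₀, (Matrix.exp ℝ (t • M)).mulVec P₀ converges to P* as t → ∞. -/
/-!
Since `M + c • 1` is entrywise nonnegative for large `c`,
`exp (t • M) = e^{-ct} exp (t • (M + c • 1))` is column-stochastic for `t ≥ 0`, and irreducibility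
makes every entry of `S = exp M` positive. A column-stochastic `n × n` matrix whose entries are
all `≥ δ` contracts the `ℓ¹` norm of zero-sum vectors by the factor `1 - n δ < 1`. The columns of
`M` sum to zero, so `M` has a kernel vector `v`; as `S v = v`, the contraction forbids `∑ v = 0`,
and normalizing gives `P*`. Then `exp (t • M) P₀ - P* = exp (t • M) (P₀ - P*)` decays like
`(1 - n δ) ^ ⌊t⌋`, `P* ≥ 0` as a limit of probability vectors, and `P* = S P* > 0`.
-/

open Filter Topology Matrix NormedSpace

theorem pi_norm_le_sum_abs {σ : Type*} [Fintype σ] (v : σ → ℝ) : ‖v‖ ≤ ∑ i, |v i| :=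
  (pi_norm_le_iff_of_nonneg (by positivity)).2 fun i =>
    Finset.single_le_sum (f := fun i => |v i|) (fun i _ => abs_nonneg _) (Finset.mem_univ i)

namespace Matrix

variable {σ : Type*} [Fintype σ]

theorem sum_abs_mulVec_le {A : Matrix σ σ ℝ} {δ : ℝ} (hcol : ∀ j, ∑ i, A i j = 1)
    (hδ : ∀ i j, δ ≤ A i j) {v : σ → ℝ} (hv : ∑ i, v i = 0) :
    ∑ i, |(A *ᵥ v) i| ≤ (1 - Fintype.card σ * δ) * ∑ i, |v i| := by
  -- subtracting `δ` from every entry does not change `A *ᵥ v` on zero-sum vectors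
  have hshift : ∀ i, (A *ᵥ v) i = ∑ j, (A i j - δ) * v j := fun i => by
    simp only [mulVec, dotProduct, sub_mul, Finset.sum_sub_distrib, ← Finset.mul_sum, hv,
      mul_zero, sub_zero]
  calc ∑ i, |(A *ᵥ v) i| ≤ ∑ i, ∑ j, (A i j - δ) * |v j| :=
        Finset.sum_le_sum fun i _ => by
        rw [hshift]
        refine (Finset.abs_sum_le_sum_abs _ _).trans_eq (Finset.sum_congr rfl fun j _ => ?_)
        rw [abs_mul, abs_of_nonneg (sub_nonneg.2 (hδ i j))]
    _ = ∑ j, (∑ i, (A i j - δ)) * |v j| := by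
        rw [Finset.sum_comm]; simp only [Finset.sum_mul]
    _ = (1 - Fintype.card σ * δ) * ∑ i, |v i| := by
        simp only [Finset.sum_sub_distrib, hcol, Finset.sum_const, Finset.card_univ,
          nsmul_eq_mul, Finset.mul_sum]

theorem exists_sum_abs_mulVec_le_mul [Nonempty σ] {A : Matrix σ σ ℝ}
    (hcol : ∀ j, ∑ i, A i j = 1) (hpos : ∀ i j, 0 < A i j) :
    ∃ r, 0 ≤ r ∧ r < 1 ∧
      ∀ v : σ → ℝ, ∑ i, v i = 0 → ∑ i, |(A *ᵥ v) i| ≤ r * ∑ i, |v i| := by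
  obtain ⟨⟨i₀, j₀⟩, hmin⟩ := Finite.exists_min fun p : σ × σ => A p.1 p.2
  have hδ : ∀ i j, A i₀ j₀ ≤ A i j := fun i j => hmin (i, j)
  refine ⟨1 - Fintype.card σ * A i₀ j₀, ?_, ?_, fun v hv => sum_abs_mulVec_le hcol hδ hv⟩
  · have : ∑ _i : σ, A i₀ j₀ ≤ ∑ i, A i j₀ := Finset.sum_le_sum fun i _ => hδ i j₀
    simp only [Finset.sum_const, Finset.card_univ, nsmul_eq_mul, hcol] at this
    linarith
  · have : (0 : ℝ) < Fintype.card σ := by exact_mod_cast Fintype.card_pos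
    nlinarith [hpos i₀ j₀]

theorem mulVec_pos_of_pos {A : Matrix σ σ ℝ} (hA : ∀ i j, 0 < A i j) {v : σ → ℝ}
    (hv : 0 ≤ v) (hv0 : v ≠ 0) (i : σ) : 0 < (A *ᵥ v) i := by
  obtain ⟨j, hj⟩ := Function.ne_iff.1 hv0
  exact Finset.sum_pos' (fun k _ => mul_nonneg (hA i k).le (hv k))
    ⟨j, Finset.mem_univ j, mul_pos (hA i j) ((hv j).lt_of_ne' hj)⟩

variable [DecidableEq σ]

theorem sum_abs_pow_mulVec_le {A : Matrix σ σ ℝ} (hA : A ∈ colStochastic ℝ σ) {r : ℝ}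
    (hr : 0 ≤ r)
    (hcontr : ∀ v : σ → ℝ, ∑ i, v i = 0 → ∑ i, |(A *ᵥ v) i| ≤ r * ∑ i, |v i|)
    {v : σ → ℝ} (hv : ∑ i, v i = 0) (k : ℕ) :
    ∑ i, |(A ^ k *ᵥ v) i| ≤ r ^ k * ∑ i, |v i| := by
  induction k with
  | zero => simp
  | succ k ih =>
    have hk : ∑ i, (A ^ k *ᵥ v) i = 0 := by
      rw [sum_mulVec_of_mem_colStochastic (pow_mem hA k), hv]
    calc ∑ i, |(A ^ (k + 1) *ᵥ v) i| = ∑ i, |(A *ᵥ (A ^ k *ᵥ v)) i| := by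
          rw [pow_succ', mulVec_mulVec]
      _ ≤ r * (r ^ k * ∑ i, |v i|) := (hcontr _ hk).trans (mul_le_mul_of_nonneg_left ih hr)
      _ = r ^ (k + 1) * ∑ i, |v i| := by ring

theorem hasSum_exp_series (A : Matrix σ σ ℝ) :
    HasSum (fun n => (n.factorial : ℝ)⁻¹ • A ^ n) (exp A) := by
  let _ : NormedRing (Matrix σ σ ℝ) := Matrix.linftyOpNormedRing
  let _ : NormedAlgebra ℝ (Matrix σ σ ℝ) := Matrix.linftyOpNormedAlgebra
  exact exp_series_hasSum_exp' A

theorem hasSum_exp_apply (A : Matrix σ σ ℝ) (i j : σ) :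
    HasSum (fun n => (n.factorial : ℝ)⁻¹ * (A ^ n) i j) (exp A i j) :=
  Pi.hasSum.1 (Pi.hasSum.1 (hasSum_exp_series A) i) j

theorem hasSum_exp_mulVec (A : Matrix σ σ ℝ) (v : σ → ℝ) :
    HasSum (fun n => (n.factorial : ℝ)⁻¹ • (A ^ n *ᵥ v)) (exp A *ᵥ v) :=
  Pi.hasSum.2 fun i => by
    simp only [mulVec, dotProduct, Pi.smul_apply, smul_eq_mul, Finset.mul_sum, ← mul_assoc]
    exact hasSum_sum fun j _ => (hasSum_exp_apply A i j).mul_right (v j)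

theorem exp_mulVec_eq_self {A : Matrix σ σ ℝ} {v : σ → ℝ} (h : A *ᵥ v = 0) :
    exp A *ᵥ v = v := by
  have hterm : ∀ n ≠ 0, (n.factorial : ℝ)⁻¹ • (A ^ n *ᵥ v) = 0 := fun n hn => by
    rw [← Nat.succ_pred_eq_of_ne_zero hn, pow_succ, ← mulVec_mulVec, h, mulVec_zero, smul_zero]
  simpa using (hasSum_exp_mulVec A v).unique (hasSum_single 0 hterm)

theorem vecMul_exp_eq_self {A : Matrix σ σ ℝ} {v : σ → ℝ} (h : v ᵥ* A = 0) :
    v ᵥ* exp A = v := by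
  rw [← mulVec_transpose, ← exp_transpose]
  exact exp_mulVec_eq_self (by rwa [mulVec_transpose])

theorem exp_add_smul_one (A : Matrix σ σ ℝ) (c : ℝ) :
    exp (A + c • 1) = Real.exp c • exp A := by
  have hc : exp (c • 1 : Matrix σ σ ℝ) = Real.exp c • 1 := by
    rw [smul_one_eq_diagonal, exp_diagonal, Pi.exp_def, smul_one_eq_diagonal, Real.exp_eq_exp_ℝ]
  rw [exp_add_of_commute _ _ ((Commute.one_right A).smul_right c), hc, mul_smul_comm, mul_one]

theorem exp_apply_eq_exp_neg_mul (A : Matrix σ σ ℝ) (c : ℝ) (i j : σ) :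
    exp A i j = Real.exp (-c) * exp (A + c • 1) i j := by
  rw [exp_add_smul_one, smul_apply, smul_eq_mul, ← mul_assoc, ← Real.exp_add, neg_add_cancel,
    Real.exp_zero, one_mul]

theorem exists_pow_apply_pos_of_reflTransGen {A : Matrix σ σ ℝ} (hA : ∀ i j, 0 ≤ A i j)
    {i j : σ} (h : Relation.ReflTransGen (fun a b => 0 < A b a) j i) :
    ∃ k, 0 < (A ^ k) i j := by
  induction h with
  | refl => exact ⟨0, by simp⟩
  | @tail b c _ hbc ih =>
    obtain ⟨k, hk⟩ := ih
    refine ⟨k + 1, ?_⟩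
    rw [pow_succ', mul_apply]
    exact Finset.sum_pos' (fun m _ => mul_nonneg (hA _ _) (pow_apply_nonneg hA k _ _))
      ⟨b, Finset.mem_univ b, mul_pos hbc hk⟩

theorem exp_apply_nonneg {A : Matrix σ σ ℝ} (hA : ∀ i j, 0 ≤ A i j) (i j : σ) :
    0 ≤ exp A i j :=
  (hasSum_exp_apply A i j).nonneg fun n => mul_nonneg (by positivity) (pow_apply_nonneg hA n i j)

theorem exp_apply_pos_of_pow_apply_pos {A : Matrix σ σ ℝ} (hA : ∀ i j, 0 ≤ A i j) {i j : σ}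
    {k : ℕ} (hk : 0 < (A ^ k) i j) : 0 < exp A i j :=
  lt_of_lt_of_le (by positivity) <| le_hasSum (hasSum_exp_apply A i j) k fun n _ =>
    mul_nonneg (by positivity) (pow_apply_nonneg hA n i j)

theorem exists_add_smul_one_nonneg {A : Matrix σ σ ℝ} (hA : ∀ i j, i ≠ j → 0 ≤ A i j) :
    ∃ c : ℝ, ∀ i j, 0 ≤ (A + c • 1) i j := by
  refine ⟨∑ k, |A k k|, fun i j => ?_⟩
  rcases eq_or_ne i j with rfl | hij
  · have := Finset.single_le_sum (fun k _ => abs_nonneg (A k k)) (Finset.mem_univ i)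
    simp only [add_apply, smul_apply, one_apply_eq, smul_eq_mul, mul_one]
    linarith [neg_abs_le (A i i)]
  · simpa [one_apply_ne hij] using hA i j hij

theorem exp_apply_nonneg_of_offDiag_nonneg {A : Matrix σ σ ℝ} (hA : ∀ i j, i ≠ j → 0 ≤ A i j)
    (i j : σ) : 0 ≤ exp A i j := by
  obtain ⟨c, hc⟩ := exists_add_smul_one_nonneg hA
  rw [exp_apply_eq_exp_neg_mul A c]
  exact mul_nonneg (Real.exp_pos _).le (exp_apply_nonneg hc i j)

theorem exp_apply_pos_of_reflTransGen {A : Matrix σ σ ℝ} (hA : ∀ i j, i ≠ j → 0 ≤ A i j)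
    {i j : σ} (h : Relation.ReflTransGen (fun a b => a ≠ b ∧ 0 < A b a) j i) :
    0 < exp A i j := by
  obtain ⟨c, hc⟩ := exists_add_smul_one_nonneg hA
  have hpath : Relation.ReflTransGen (fun a b => 0 < (A + c • 1) b a) j i :=
    Relation.ReflTransGen.mono (fun a b hab => by simpa [one_apply_ne hab.1.symm] using hab.2) _ _ h
  obtain ⟨k, hk⟩ := exists_pow_apply_pos_of_reflTransGen hc hpath
  rw [exp_apply_eq_exp_neg_mul A c]
  exact mul_pos (Real.exp_pos _) (exp_apply_pos_of_pow_apply_pos hc hk)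

theorem exp_mem_colStochastic {A : Matrix σ σ ℝ} (hoff : ∀ i j, i ≠ j → 0 ≤ A i j)
    (hcol : 1 ᵥ* A = 0) : exp A ∈ colStochastic ℝ σ :=
  ⟨exp_apply_nonneg_of_offDiag_nonneg hoff, vecMul_exp_eq_self hcol⟩

theorem tendsto_exp_smul_mulVec_zero [Nonempty σ] {M : Matrix σ σ ℝ}
    (hstoch : ∀ t : ℝ, 0 ≤ t → exp (t • M) ∈ colStochastic ℝ σ)
    (hpos : ∀ i j, 0 < exp M i j)
    {w : σ → ℝ} (hw : ∑ i, w i = 0) :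
    Tendsto (fun t : ℝ => exp (t • M) *ᵥ w) atTop (𝓝 0) := by
  have hS : exp M ∈ colStochastic ℝ σ := by simpa using hstoch 1 zero_le_one
  obtain ⟨r, hr0, hr1, hcontr⟩ :=
    exists_sum_abs_mulVec_le_mul (sum_col_of_mem_colStochastic hS) hpos
  have hbound : ∀ t : ℝ, 0 ≤ t → ‖exp (t • M) *ᵥ w‖ ≤ r ^ ⌊t⌋₊ * ∑ i, |w i| := by
    intro t ht
    set k := ⌊t⌋₊
    have hs : exp ((t - k) • M) ∈ colStochastic ℝ σ :=
      hstoch _ (sub_nonneg.2 (Nat.floor_le ht))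
    have hsplit : exp (t • M) = exp ((t - k) • M) * exp M ^ k := by
      rw [← exp_nsmul, ← Nat.cast_smul_eq_nsmul ℝ,
        ← exp_add_of_commute _ _ (((Commute.refl M).smul_left _).smul_right _), ← add_smul,
        sub_add_cancel]
    have hk : ∑ i, (exp M ^ k *ᵥ w) i = 0 := by
      rw [sum_mulVec_of_mem_colStochastic (pow_mem hS k), hw]
    calc ‖exp (t • M) *ᵥ w‖
          ≤ ∑ i, |(exp ((t - k) • M) *ᵥ (exp M ^ k *ᵥ w)) i| := by
          rw [mulVec_mulVec, ← hsplit]; exact pi_norm_le_sum_abs _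
      _ ≤ ∑ i, |(exp M ^ k *ᵥ w) i| := by
          simpa using sum_abs_mulVec_le (sum_col_of_mem_colStochastic hs)
            (fun i j => nonneg_of_mem_colStochastic hs) hk
      _ ≤ r ^ k * ∑ i, |w i| := sum_abs_pow_mulVec_le hS hr0 hcontr hw k
  have hlim : Tendsto (fun t : ℝ => r ^ ⌊t⌋₊ * ∑ i, |w i|) atTop (𝓝 0) := by
    simpa using ((tendsto_pow_atTop_nhds_zero_of_lt_one hr0 hr1).comp
      tendsto_nat_floor_atTop).mul_const (∑ i, |w i|)
  exact squeeze_zero_norm' ((eventually_ge_atTop 0).mono hbound) hlim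

theorem exists_mulVec_eq_zero_sum_eq_one [Nonempty σ] {M : Matrix σ σ ℝ}
    (hcol : 1 ᵥ* M = 0)
    (hScol : ∀ j, ∑ i, exp M i j = 1) (hpos : ∀ i j, 0 < exp M i j) :
    ∃ P : σ → ℝ, M *ᵥ P = 0 ∧ ∑ i, P i = 1 := by
  obtain ⟨v, hv0, hMv⟩ :=
    exists_mulVec_eq_zero_iff.2 (exists_vecMul_eq_zero_iff.1 ⟨1, one_ne_zero, hcol⟩)
  have hsum : ∑ i, v i ≠ 0 := by
    intro hsum
    obtain ⟨r, -, hr1, hcontr⟩ := exists_sum_abs_mulVec_le_mul hScol hpos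
    have h := hcontr v hsum
    rw [exp_mulVec_eq_self hMv] at h
    have h0 : ∑ i, |v i| = 0 := by
      nlinarith [Finset.sum_nonneg fun i (_ : i ∈ Finset.univ) => abs_nonneg (v i)]
    refine hv0 (funext fun i => abs_eq_zero.1 ?_)
    exact (Finset.sum_eq_zero_iff_of_nonneg fun i _ => abs_nonneg (v i)).1 h0 i
      (Finset.mem_univ i)
  refine ⟨(∑ i, v i)⁻¹ • v, by rw [mulVec_smul, hMv, smul_zero], ?_⟩
  simp only [Pi.smul_apply, smul_eq_mul, ← Finset.mul_sum, inv_mul_cancel₀ hsum]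

end Matrix

/-- For an irreducible transition matrix `M`, there is a stationary
distribution `P*` with strictly positive entries such that for every initial probability
vector `P₀`, `exp(t M) P₀` converges to `P*` as `t → ∞`.
(In this Mathlib version the matrix exponential `Matrix.exp ℝ` is `NormedSpace.exp ℝ`.) -/
theorem solution_tendsto_positive_stationary_of_irreducible
    {σ : Type*} [Fintype σ] [Nonempty σ] [DecidableEq σ]
    (M : Matrix σ σ ℝ)
    (hMoff : ∀ i j : σ, i ≠ j → 0 ≤ M i j)
    (hMcol : ∀ j : σ, ∑ i, M i j = 0)
    (hirr : ∀ i j : σ, Relation.ReflTransGen (fun a b : σ => a ≠ b ∧ 0 < M b a) i j) :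
    ∃ Pstar : σ → ℝ, (∀ i, 0 < Pstar i) ∧ (∑ i, Pstar i = 1) ∧ M.mulVec Pstar = 0 ∧
      ∀ P₀ : σ → ℝ, (∀ i, 0 ≤ P₀ i) → (∑ i, P₀ i = 1) →
        Tendsto (fun t : ℝ => (NormedSpace.exp (t • M)).mulVec P₀) atTop (𝓝 Pstar) := by
  have hcol : 1 ᵥ* M = 0 := funext fun j => by simpa [vecMul, dotProduct] using hMcol j
  have hstoch : ∀ t : ℝ, 0 ≤ t → exp (t • M) ∈ colStochastic ℝ σ := fun t ht =>
    exp_mem_colStochastic (fun i j hij => mul_nonneg ht (hMoff i j hij))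
      (by rw [vecMul_smul, hcol, smul_zero])
  have hS : exp M ∈ colStochastic ℝ σ := by simpa using hstoch 1 zero_le_one
  have hpos : ∀ i j, 0 < exp M i j := fun i j =>
    exp_apply_pos_of_reflTransGen hMoff (hirr j i)
  obtain ⟨P, hMP, hPsum⟩ :=
    exists_mulVec_eq_zero_sum_eq_one hcol (sum_col_of_mem_colStochastic hS) hpos
  have hlim : ∀ P₀ : σ → ℝ, ∑ i, P₀ i = 1 →
      Tendsto (fun t : ℝ => exp (t • M) *ᵥ P₀) atTop (𝓝 P) := by
    intro P₀ hP₀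
    have hw : ∑ i, (P₀ - P) i = 0 := by simp [Finset.sum_sub_distrib, hP₀, hPsum]
    have hfix : ∀ t : ℝ, exp (t • M) *ᵥ P = P := fun t =>
      exp_mulVec_eq_self (by rw [smul_mulVec, hMP, smul_zero])
    simpa [mulVec_sub, hfix] using (tendsto_exp_smul_mulVec_zero hstoch hpos hw).add_const P
  obtain ⟨j₀⟩ := ‹Nonempty σ›
  have hsingle : (0 : σ → ℝ) ≤ Pi.single j₀ 1 := Pi.single_nonneg.2 zero_le_one
  have hPnonneg : 0 ≤ P := ge_of_tendsto (hlim (Pi.single j₀ 1) (by simp)) <|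
    (eventually_ge_atTop 0).mono fun t ht =>
      nonneg_mulVec_of_mem_colStochastic (hstoch t ht) hsingle
  refine ⟨P, fun i => ?_, hPsum, hMP, fun P₀ _ hP₀ => hlim P₀ hP₀⟩
  rw [← exp_mulVec_eq_self hMP]
  exact mulVec_pos_of_pos hpos hPnonneg (fun h => by simp [h] at hPsum) i
end
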